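/- arXiv:1509.02585 — 7 statements merged into one kernel-verified Lean document; each statement's English description precedes it below -/
import Mathlib

section
/- Let $A \in \mathbb{R}^{n\times m}$ be a real matrix, $c \in \mathbb{R}^m$, and $\Delta > 0$. A vector $v^* \in \mathbb{R}^n$ is a global minimizer of $v \mapsto \|c + A^T v\|^2$ over the ball $\{v \in \mathbb{R}^n : \|v\| \le \Delta\}$ if and only if $\|v^*\| \le \Delta$ and there exists a scalar $\eta \ge 0$ such that $(A A^T + \eta I)v^* = -A c$ and $\eta(\Delta - \|v^*\|) = 0$. -/
/-!
The points `c + Aᵀ v` with `‖v‖ ≤ Δ` form a convex set, and a point `y` of a convex set has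
minimal norm in it iff `0 ≤ ⟪y, z - y⟫` for every other point `z`. Pulled back through `Aᵀ`, this
is the variational inequality `0 ≤ ⟪g, v - v*⟫` on the ball, with `g = A (c + Aᵀ v*)`. On a ball
of positive radius that inequality holds iff `g = -η v*` for some `η ≥ 0` vanishing unless `v*` lies
on the sphere: if `g ≠ 0`, testing against `v = -(Δ / ‖g‖) g` forces equality in Cauchy–Schwarz.
-/

open Matrix Set
open scoped RealInnerProductSpace

section
variable {E F : Type*} [NormedAddCommGroup E] [InnerProductSpace ℝ E]
  [NormedAddCommGroup F] [InnerProductSpace ℝ F]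

theorem isMinOn_sq_norm_iff_inner_sub_nonneg {K : Set F} {y : F} (hK : Convex ℝ K) (hy : y ∈ K) :
    IsMinOn (fun z => ‖z‖ ^ 2) K y ↔ ∀ z ∈ K, 0 ≤ ⟪y, z - y⟫ := by
  refine ⟨fun hmin z hz => ?_, fun h => isMinOn_iff.2 fun z hz => ?_⟩
  · have := hmin.localize.hasFDerivWithinAt_nonneg
      (hasStrictFDerivAt_norm_sq y).hasFDerivAt.hasFDerivWithinAt
      (sub_mem_posTangentConeAt_of_segment_subset (hK.segment_subset hy hz))
    simp only [_root_.smul_apply, innerSL_apply_apply, nsmul_eq_mul, Nat.cast_ofNat] at this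
    linarith
  · have hexp : ‖z‖ ^ 2 = ‖y‖ ^ 2 + 2 * ⟪y, z - y⟫ + ‖z - y‖ ^ 2 := by
      rw [← norm_add_sq_real, add_sub_cancel]
    nlinarith [h z hz, sq_nonneg ‖z - y‖]

theorem isMinOn_sq_norm_add_apply_iff (T : E →ₗ[ℝ] F) (c : F) {s : Set E} {v₀ : E}
    (hs : Convex ℝ s) (hv₀ : v₀ ∈ s) :
    IsMinOn (fun v => ‖c + T v‖ ^ 2) s v₀ ↔ ∀ v ∈ s, 0 ≤ ⟪c + T v₀, T (v - v₀)⟫ := by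
  have hK : Convex ℝ ((fun v => c + T v) '' s) := by
    simpa only [image_image] using (hs.linear_image T).translate c
  have := isMinOn_sq_norm_iff_inner_sub_nonneg hK (mem_image_of_mem _ hv₀)
  simpa only [isMinOn_iff, forall_mem_image, add_sub_add_left_eq_sub, ← map_sub] using this

theorem exists_multiplier_of_forall_inner_sub_nonneg {Δ : ℝ} (hΔ : 0 < Δ) {g v₀ : E}
    (hv₀ : ‖v₀‖ ≤ Δ) (h : ∀ v, ‖v‖ ≤ Δ → 0 ≤ ⟪g, v - v₀⟫) :
    ∃ η, 0 ≤ η ∧ g + η • v₀ = 0 ∧ η * (Δ - ‖v₀‖) = 0 := by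
  rcases eq_or_ne g 0 with rfl | hg
  · exact ⟨0, le_rfl, by simp, zero_mul _⟩
  have hg' : 0 < ‖g‖ := norm_pos_iff.2 hg
  have htest := h ((-(Δ / ‖g‖)) • g) (by
    rw [norm_smul, norm_neg, Real.norm_of_nonneg (by positivity), div_mul_cancel₀ _ hg'.ne'])
  rw [inner_sub_right, inner_smul_right, real_inner_self_eq_norm_sq] at htest
  have hcs : -(‖g‖ * ‖v₀‖) ≤ ⟪g, v₀⟫ := neg_le_of_abs_le (abs_real_inner_le_norm g v₀)
  have hkey : -(Δ / ‖g‖) * ‖g‖ ^ 2 = -(‖g‖ * Δ) := by field_simp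
  have hnorm : ‖v₀‖ = Δ := by nlinarith
  rw [hnorm] at hcs
  have heq : ⟪-g, v₀⟫ = ‖-g‖ * ‖v₀‖ := by rw [inner_neg_left, norm_neg, hnorm]; linarith
  rw [inner_eq_norm_mul_iff_real, norm_neg, hnorm] at heq
  refine ⟨‖g‖ / Δ, by positivity, ?_, by rw [hnorm, sub_self, mul_zero]⟩
  rw [div_eq_inv_mul, mul_smul, ← heq, inv_smul_smul₀ hΔ.ne', add_neg_cancel]

theorem inner_sub_nonneg_of_multiplier {Δ η : ℝ} {v₀ v : E} (hη : 0 ≤ η)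
    (hslack : η * (Δ - ‖v₀‖) = 0) (hv : ‖v‖ ≤ Δ) : 0 ≤ ⟪-(η • v₀), v - v₀⟫ := by
  have hcs : ⟪v₀, v⟫ ≤ ‖v₀‖ * ‖v‖ := real_inner_le_norm v₀ v
  rw [inner_neg_left, inner_smul_left, inner_sub_right, real_inner_self_eq_norm_sq]
  simp only [conj_trivial]
  have hboundary : η * ‖v₀‖ * Δ = η * ‖v₀‖ ^ 2 := by linear_combination ‖v₀‖ * hslack
  nlinarith [mul_le_mul_of_nonneg_left hv (mul_nonneg hη (norm_nonneg v₀)),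
    mul_le_mul_of_nonneg_left hcs hη]

theorem isMinOn_sq_norm_add_apply_closedBall_iff [FiniteDimensional ℝ E] [FiniteDimensional ℝ F]
    (T : E →ₗ[ℝ] F) (c : F) {Δ : ℝ} (hΔ : 0 < Δ) {v₀ : E} (hv₀ : ‖v₀‖ ≤ Δ) :
    IsMinOn (fun v => ‖c + T v‖ ^ 2) (Metric.closedBall 0 Δ) v₀ ↔
      ∃ η, 0 ≤ η ∧ T.adjoint (c + T v₀) + η • v₀ = 0 ∧ η * (Δ - ‖v₀‖) = 0 := by
  rw [isMinOn_sq_norm_add_apply_iff T c (convex_closedBall 0 Δ) (mem_closedBall_zero_iff.2 hv₀)]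
  simp only [mem_closedBall_zero_iff, ← LinearMap.adjoint_inner_left]
  refine ⟨exists_multiplier_of_forall_inner_sub_nonneg hΔ hv₀, ?_⟩
  rintro ⟨η, hη, hstat, hslack⟩ v hv
  rw [eq_neg_of_add_eq_zero_left hstat]
  exact inner_sub_nonneg_of_multiplier hη hslack hv

end

/-- Characterization of global minimizers of the trust-region normal subproblem
`min ‖c + Aᵀ v‖²  s.t. ‖v‖ ≤ Δ` (Levenberg–Marquardt characterization). -/
theorem trust_region_normal_subproblem_characterization
    (n m : ℕ) (A : Matrix (Fin n) (Fin m) ℝ) (c : EuclideanSpace ℝ (Fin m))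
    (Δ : ℝ) (hΔ : 0 < Δ) (vstar : EuclideanSpace ℝ (Fin n)) :
    (‖vstar‖ ≤ Δ ∧ ∀ v : EuclideanSpace ℝ (Fin n), ‖v‖ ≤ Δ →
        ‖c + toEuclideanLin Aᵀ vstar‖ ^ 2 ≤ ‖c + toEuclideanLin Aᵀ v‖ ^ 2) ↔
      (‖vstar‖ ≤ Δ ∧ ∃ η : ℝ, 0 ≤ η ∧
        toEuclideanLin (A * Aᵀ + η • (1 : Matrix (Fin n) (Fin n) ℝ)) vstar =
          -(toEuclideanLin A c) ∧
        η * (Δ - ‖vstar‖) = 0) := by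
  have hadj : (toEuclideanLin Aᵀ).adjoint = toEuclideanLin A := by
    rw [← toEuclideanLin_conjTranspose_eq_adjoint, conjTranspose_eq_transpose_of_trivial,
      transpose_transpose]
  have hshift (η : ℝ) : toEuclideanLin (A * Aᵀ + η • (1 : Matrix (Fin n) (Fin n) ℝ)) vstar =
      toEuclideanLin A (toEuclideanLin Aᵀ vstar) + η • vstar := by
    simp
  refine and_congr_right fun hv => ?_
  have hmin := isMinOn_sq_norm_add_apply_closedBall_iff (toEuclideanLin Aᵀ) c hΔ hv
  simp only [isMinOn_iff, mem_closedBall_zero_iff, hadj, map_add] at hmin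
  rw [hmin]
  simp only [hshift, add_assoc, add_eq_zero_iff_eq_neg']
end

section
/- Let $W \in \mathbb{R}^{n\times n}$ be symmetric, $A \in \mathbb{R}^{n\times m}$, $\zeta \ge 0$, $\nu > 0$, and set $M := W + \tfrac{1}{\nu} A A^T + \zeta I$. Assume $d^T M d \ge b_1 \|d\|^2$ for all $d \in \mathbb{R}^n$ with $b_1 > 0$. If $g \in \mathbb{R}^n$ and $t \in \mathbb{R}^n$ satisfy the first-order condition $g + M t = 0$, then $\|A^T t\|^2 \le \tfrac{2\nu}{b_1}\|g\|^2\left(1 + \tfrac{2}{b_1}\|W + \zeta I\|\right)$. -/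
/-!
Testing the first-order condition against `t` gives `⟪t, M t⟫ = -⟪t, g⟫ ≤ ‖t‖‖g‖`. Coercivity of
`M` then yields `b₁‖t‖ ≤ ‖g‖`, while splitting `M = (W + ζI) + (1/ν)AAᵀ` and bounding the first
quadratic form by the operator norm gives `(1/ν)‖Aᵀt‖² ≤ ‖t‖‖g‖ + ‖W + ζI‖‖t‖²`. Substituting
`‖t‖ ≤ ‖g‖/b₁` yields the claim (even without the factors `2`).
-/

open Matrix
open scoped RealInnerProductSpace
open scoped Matrix.Norms.L2Operator

theorem mul_norm_le_norm_of_mul_norm_sq_le_inner {E : Type*} [NormedAddCommGroup E]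
    [InnerProductSpace ℝ E] {b : ℝ} {x y : E} (h : b * ‖x‖ ^ 2 ≤ ⟪x, y⟫) :
    b * ‖x‖ ≤ ‖y‖ := by
  rcases (norm_nonneg x).eq_or_lt with hx | hx
  · simp [← hx]
  · have : b * ‖x‖ * ‖x‖ ≤ ‖y‖ * ‖x‖ := by
      nlinarith [real_inner_le_norm x y]
    exact le_of_mul_le_mul_right this hx

namespace Matrix

variable {m n : Type*} [Fintype m] [Fintype n] [DecidableEq m] [DecidableEq n]

theorem inner_toEuclideanLin_mul_transpose_self (A : Matrix n m ℝ) (x : EuclideanSpace ℝ n) :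
    ⟪x, toEuclideanLin (A * Aᵀ) x⟫ = ‖toEuclideanLin Aᵀ x‖ ^ 2 := by
  have hadj : toEuclideanLin Aᵀ = LinearMap.adjoint (toEuclideanLin A) := by
    simpa using toEuclideanLin_conjTranspose_eq_adjoint A
  rw [toLpLin_mul_same, LinearMap.comp_apply, ← LinearMap.adjoint_inner_left, ← hadj,
    real_inner_self_eq_norm_sq]

omit [DecidableEq m] in
theorem abs_inner_toEuclideanLin_le_l2_opNorm_mul (B : Matrix n n ℝ) (x : EuclideanSpace ℝ n) :
    |⟪x, toEuclideanLin B x⟫| ≤ ‖B‖ * ‖x‖ ^ 2 :=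
  calc |⟪x, toEuclideanLin B x⟫| ≤ ‖x‖ * ‖toEuclideanLin B x‖ := abs_real_inner_le_norm _ _
    _ ≤ ‖x‖ * (‖B‖ * ‖x‖) := by gcongr; exact l2_opNorm_mulVec B x
    _ = ‖B‖ * ‖x‖ ^ 2 := by ring

end Matrix

theorem quasi_tangential_null_space_violation_bound_general
    (n m : ℕ) (W : Matrix (Fin n) (Fin n) ℝ)
    (A : Matrix (Fin n) (Fin m) ℝ) (ζ ν b1 : ℝ) (hν : 0 < ν) (hb1 : 0 < b1)
    (M : Matrix (Fin n) (Fin n) ℝ)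
    (hMdef : M = W + (1 / ν) • (A * Aᵀ) + ζ • (1 : Matrix (Fin n) (Fin n) ℝ))
    (hpos : ∀ d : EuclideanSpace ℝ (Fin n), b1 * ‖d‖ ^ 2 ≤ ⟪d, toEuclideanLin M d⟫)
    (g t : EuclideanSpace ℝ (Fin n)) (hfoc : g + toEuclideanLin M t = 0) :
    ‖toEuclideanLin Aᵀ t‖ ^ 2 ≤
      (2 * ν / b1) * ‖g‖ ^ 2 *
        (1 + (2 / b1) * ‖W + ζ • (1 : Matrix (Fin n) (Fin n) ℝ)‖) := by
  have hMt : toEuclideanLin M t = -g := (neg_eq_of_add_eq_zero_right hfoc).symm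
  have ht : ‖t‖ ≤ ‖g‖ / b1 := by
    rw [le_div_iff₀' hb1]
    simpa [hMt] using mul_norm_le_norm_of_mul_norm_sq_le_inner (hpos t)
  have hviol : (1 / ν) * ‖toEuclideanLin Aᵀ t‖ ^ 2 ≤
      ‖t‖ * ‖g‖ + ‖W + ζ • (1 : Matrix (Fin n) (Fin n) ℝ)‖ * ‖t‖ ^ 2 := by
    have hsplit : ⟪t, toEuclideanLin M t⟫ = ⟪t, toEuclideanLin (W + ζ • 1) t⟫
        + (1 / ν) * ‖toEuclideanLin Aᵀ t‖ ^ 2 := by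
      rw [hMdef, add_right_comm, map_add, LinearMap.add_apply, inner_add_right, map_smul,
        LinearMap.smul_apply, inner_smul_right, inner_toEuclideanLin_mul_transpose_self]
    have hg := real_inner_le_norm t (-g)
    rw [norm_neg, ← hMt] at hg
    linarith [neg_abs_le ⟪t, toEuclideanLin (W + ζ • 1) t⟫,
      abs_inner_toEuclideanLin_le_l2_opNorm_mul (W + ζ • 1) t]
  have hN : 0 ≤ ‖W + ζ • (1 : Matrix (Fin n) (Fin n) ℝ)‖ := norm_nonneg _
  generalize ‖W + ζ • (1 : Matrix (Fin n) (Fin n) ℝ)‖ = N at hN hviol ⊢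
  calc ‖toEuclideanLin Aᵀ t‖ ^ 2 ≤ ν * (‖t‖ * ‖g‖ + N * ‖t‖ ^ 2) := by
        rwa [one_div, inv_mul_le_iff₀ hν] at hviol
    _ ≤ ν * (‖g‖ / b1 * ‖g‖ + N * (‖g‖ / b1) ^ 2) := by gcongr
    _ ≤ (2 * ν / b1) * ‖g‖ ^ 2 * (1 + (2 / b1) * N) := by
        field_simp
        nlinarith [mul_nonneg (sq_nonneg ‖g‖) (add_nonneg hb1.le hN), mul_nonneg (sq_nonneg ‖g‖) hN]

/-- Bound on the violation of the null-space condition by the quasi-tangential step: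
if `M = W + (1/ν)AAᵀ + ζI` is uniformly positive definite with constant `b₁` and
`g + Mt = 0`, then `‖Aᵀt‖² ≤ (2ν/b₁)‖g‖²(1 + (2/b₁)‖W + ζI‖)`. -/
theorem quasi_tangential_null_space_violation_bound
    (n m : ℕ) (W : Matrix (Fin n) (Fin n) ℝ) (hW : W.IsSymm)
    (A : Matrix (Fin n) (Fin m) ℝ) (ζ ν b1 : ℝ) (hζ : 0 ≤ ζ) (hν : 0 < ν) (hb1 : 0 < b1)
    (M : Matrix (Fin n) (Fin n) ℝ)
    (hMdef : M = W + (1 / ν) • (A * Aᵀ) + ζ • (1 : Matrix (Fin n) (Fin n) ℝ))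
    (hpos : ∀ d : EuclideanSpace ℝ (Fin n), b1 * ‖d‖ ^ 2 ≤ ⟪d, toEuclideanLin M d⟫)
    (g t : EuclideanSpace ℝ (Fin n)) (hfoc : g + toEuclideanLin M t = 0) :
    ‖toEuclideanLin Aᵀ t‖ ^ 2 ≤
      (2 * ν / b1) * ‖g‖ ^ 2 *
        (1 + (2 / b1) * ‖W + ζ • (1 : Matrix (Fin n) (Fin n) ℝ)‖) :=
  quasi_tangential_null_space_violation_bound_general n m W A ζ ν b1 hν hb1 M hMdef hpos g t hfoc
end

section
/- Let $x \in \mathbb{R}^n$ with $x^{(i)} > 0$ for all $i$, let $d \in \mathbb{R}^n$, $\alpha > 0$, $\mu > 0$, and $\tau \in (0,1)$, and assume the fraction-to-the-boundary condition $x + \alpha d \ge (1-\tau)x$ holds componentwise. Then $\left| -\mu\sum_{i=1}^n \ln x^{(i)} + \mu\sum_{i=1}^n \ln(x^{(i)} + \alpha d^{(i)}) - \mu\alpha\sum_{i=1}^n \frac{d^{(i)}}{x^{(i)}} \right| \le \frac{\mu\alpha^2}{2(1-\tau)^2}\sum_{i=1}^n\left(\frac{d^{(i)}}{x^{(i)}}\right)^2.$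 -/
/-! Write `u = 1 + α d⁽ⁱ⁾ / x⁽ⁱ⁾`, so the `i`-th summand of the error is `μ (log u - (u - 1))` and the
fraction-to-the-boundary rule says `u ≥ 1 - τ`. The remainder of the first-order expansion of
`log` at `1` satisfies `0 ≤ (u - 1) - log u ≤ (u - 1)² / (2 min 1 u)`: for `u ≥ 1` this follows from
`log u ≥ 2 (u - 1) / (u + 1)`, for `u ≤ 1` from `(u - u⁻¹) / 2 = sinh (log u) ≤ log u`.
Since `1 - τ ≤ 1`, the bound `1 / (1 - τ)` on `1 / min 1 u` is at most `1 / (1 - τ)²`. -/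

open Real

namespace Real

lemma sub_one_sub_log_le_sq_div_two {u : ℝ} (hu : 1 ≤ u) : u - 1 - log u ≤ (u - 1) ^ 2 / 2 := by
  have hlog : 2 * (u - 1) / (u + 1) ≤ log u := by
    convert le_log_one_add_of_nonneg (sub_nonneg.mpr hu) using 2 <;> ring
  have hmid : u - 1 - 2 * (u - 1) / (u + 1) = (u - 1) ^ 2 / (u + 1) := by
    field_simp [show u + 1 ≠ 0 by linarith]
    ring
  have hden : (u - 1) ^ 2 / (u + 1) ≤ (u - 1) ^ 2 / 2 :=
    div_le_div_of_nonneg_left (sq_nonneg _) two_pos (by linarith)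
  linarith

lemma sub_one_sub_log_le_sq_div_two_mul {u : ℝ} (hu₀ : 0 < u) (hu₁ : u ≤ 1) :
    u - 1 - log u ≤ (u - 1) ^ 2 / (2 * u) := by
  have hlog : (u - u⁻¹) / 2 ≤ log u := by
    rw [← sinh_log hu₀]
    exact sinh_le_self_iff.mpr (log_nonpos hu₀.le hu₁)
  have hmid : u - 1 - (u - u⁻¹) / 2 = (u - 1) ^ 2 / (2 * u) := by
    field_simp
    ring
  linarith

lemma abs_log_sub_sub_one_le {u c : ℝ} (hc₀ : 0 < c) (hc₁ : c ≤ 1) (hcu : c ≤ u) :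
    |log u - (u - 1)| ≤ (u - 1) ^ 2 / (2 * c) := by
  have hu₀ : 0 < u := hc₀.trans_le hcu
  rw [abs_sub_comm, abs_of_nonneg (by linarith [log_le_sub_one_of_pos hu₀])]
  rcases le_total 1 u with hu₁ | hu₁
  · calc u - 1 - log u ≤ (u - 1) ^ 2 / 2 := sub_one_sub_log_le_sq_div_two hu₁
      _ ≤ (u - 1) ^ 2 / (2 * c) := by gcongr; linarith
  · calc u - 1 - log u ≤ (u - 1) ^ 2 / (2 * u) := sub_one_sub_log_le_sq_div_two_mul hu₀ hu₁
      _ ≤ (u - 1) ^ 2 / (2 * c) := by gcongr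

lemma abs_log_add_sub_log_sub_div_le {x h c : ℝ} (hx : 0 < x) (hc₀ : 0 < c) (hc₁ : c ≤ 1)
    (hch : c * x ≤ x + h) :
    |log (x + h) - log x - h / x| ≤ (h / x) ^ 2 / (2 * c) := by
  have hu : (x + h) / x - 1 = h / x := by field_simp; ring
  have hcu : c ≤ (x + h) / x := by rwa [le_div_iff₀ hx]
  have hlog : log ((x + h) / x) = log (x + h) - log x :=
    log_div (by nlinarith) hx.ne'
  simpa only [hlog, hu] using abs_log_sub_sub_one_le hc₀ hc₁ hcu

end Real

theorem barrier_term_second_order_bound_general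
    (n : ℕ) (x d : Fin n → ℝ) (hx : ∀ i, 0 < x i)
    (α μ τ : ℝ) (hμ : 0 < μ) (hτ : τ ∈ Set.Ioo (0 : ℝ) 1)
    (hftb : ∀ i, (1 - τ) * x i ≤ x i + α * d i) :
    |(-μ * ∑ i, Real.log (x i)) + μ * ∑ i, Real.log (x i + α * d i) -
        μ * α * ∑ i, d i / x i| ≤
      μ * α ^ 2 / (2 * (1 - τ) ^ 2) * ∑ i, (d i / x i) ^ 2 := by
  obtain ⟨hτ₀, hτ₁⟩ := hτ
  have hc₀ : 0 < 1 - τ := by linarith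
  have hc₁ : 1 - τ ≤ 1 := by linarith
  have hc₂ : (1 - τ) ^ 2 ≤ 1 - τ := by nlinarith
  have hcoord (i : Fin n) :
      |log (x i + α * d i) - log (x i) - α * (d i / x i)| ≤
        α ^ 2 / (2 * (1 - τ) ^ 2) * (d i / x i) ^ 2 :=
    calc _ = |log (x i + α * d i) - log (x i) - α * d i / x i| := by rw [mul_div_assoc]
      _ ≤ (α * d i / x i) ^ 2 / (2 * (1 - τ)) :=
        abs_log_add_sub_log_sub_div_le (hx i) hc₀ hc₁ (hftb i)
      _ ≤ (α * d i / x i) ^ 2 / (2 * (1 - τ) ^ 2) := by gcongr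
      _ = α ^ 2 / (2 * (1 - τ) ^ 2) * (d i / x i) ^ 2 := by ring
  have hsum : (-μ * ∑ i, log (x i)) + μ * ∑ i, log (x i + α * d i) - μ * α * ∑ i, d i / x i =
      μ * ∑ i, (log (x i + α * d i) - log (x i) - α * (d i / x i)) := by
    simp only [Finset.sum_sub_distrib, ← Finset.mul_sum]
    ring
  rw [hsum, abs_mul, abs_of_pos hμ, mul_div_assoc, mul_assoc, Finset.mul_sum]
  gcongr
  exact (Finset.abs_sum_le_sum_abs _ _).trans (Finset.sum_le_sum fun i _ => hcoord i)

/-- Second-order error bound for the logarithmic barrier term along a step satisfying the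
fraction-to-the-boundary rule `x + α d ≥ (1-τ) x`. -/
theorem barrier_term_second_order_bound
    (n : ℕ) (x d : Fin n → ℝ) (hx : ∀ i, 0 < x i)
    (α μ τ : ℝ) (hα : 0 < α) (hμ : 0 < μ) (hτ : τ ∈ Set.Ioo (0 : ℝ) 1)
    (hftb : ∀ i, (1 - τ) * x i ≤ x i + α * d i) :
    |(-μ * ∑ i, Real.log (x i)) + μ * ∑ i, Real.log (x i + α * d i) -
        μ * α * ∑ i, d i / x i| ≤
      μ * α ^ 2 / (2 * (1 - τ) ^ 2) * ∑ i, (d i / x i) ^ 2 :=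
  barrier_term_second_order_bound_general n x d hx α μ τ hμ hτ hftb
end

section
/- Let $\Omega \subseteq \mathbb{R}^n$ be open and convex, let $f : \mathbb{R}^n \to \mathbb{R}$ be differentiable on $\Omega$ with $\nabla f$ Lipschitz continuous on $\Omega$ with constant $L > 0$, let $\mu > 0$, and define the barrier function $\varphi(y) = f(y) - \mu\sum_{i=1}^n \ln y^{(i)}$ for $y > 0$. Let $x \in \Omega$ with $x > 0$ componentwise, let $d \in \mathbb{R}^n$ with $\nabla\varphi(x)^T d < 0$, let $\tau \in (0,1)$ and $\bar\alpha \in (0,1]$ be such that for all $\alpha \in [0,\bar\alpha]$ one has $x + \alpha d \in \Omega$ and $x + \alpha d \ge (1-\tau)x$ componentwise. Set $C := L + \frac{\mu}{2(1-\tau)^2 \min_i (x^{(i)})^2}$. Then for every $\rho \in (0,1)$ and every $\alpha \in (0,\bar\alpha]$ satisfying $\alpha \le \frac{-(1-\rho)\nabla\varphi(x)^T d}{C\|d\|^2}$, the Armijo condition $\varphi(x) - \varphi(x + \alpha d) \ge -\rho\,\alpha\,\nabla\varphi(x)^T d$ holds. -/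
/-!
Along the segment the fraction-to-the-boundary rule keeps every coordinate above
`(1 - τ) x⁽ⁱ⁾`, so `|1/y⁽ⁱ⁾ - 1/z⁽ⁱ⁾| ≤ |y⁽ⁱ⁾ - z⁽ⁱ⁾| / ((1 - τ)² minᵢ (x⁽ⁱ⁾)²)` there and
`∇φ = ∇f - μ X⁻¹e` is Lipschitz with constant `K = L + μ / ((1 - τ)² minᵢ (x⁽ⁱ⁾)²) ≤ 2C`.
The descent lemma for a Lipschitz gradient gives
`φ(x + αd) ≤ φ(x) + α ∇φ(x)ᵀd + C α² ‖d‖²`, and the step-size bound makes the quadratic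
term at most `-(1 - ρ) α ∇φ(x)ᵀd`.
-/

open scoped RealInnerProductSpace
open Set

section Descent

variable {E : Type*} [NormedAddCommGroup E] [InnerProductSpace ℝ E] [CompleteSpace E]

theorem HasGradientAt.hasDerivAt_comp_add_smul {φ : E → ℝ} {g x d : E} {t : ℝ}
    (h : HasGradientAt φ g (x + t • d)) :
    HasDerivAt (fun s : ℝ => φ (x + s • d)) ⟪g, d⟫ t := by
  have hline : HasDerivAt (fun s : ℝ => x + s • d) d t := by
    simpa using ((hasDerivAt_id t).smul_const d).const_add x
  simpa only [Function.comp_def, InnerProductSpace.toDual_apply_apply] using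
    h.hasFDerivAt.comp_hasDerivAt t hline

theorem le_add_inner_add_of_norm_gradient_sub_le {φ : E → ℝ} {G : E → E} {x d : E}
    {α K : ℝ} (hα : 0 ≤ α)
    (hgrad : ∀ t ∈ Icc 0 α, HasGradientAt φ (G (x + t • d)) (x + t • d))
    (hlip : ∀ t ∈ Icc 0 α, ‖G (x + t • d) - G x‖ ≤ K * ‖t • d‖) :
    φ (x + α • d) ≤ φ x + α * ⟪G x, d⟫ + K / 2 * α ^ 2 * ‖d‖ ^ 2 := by
  set ψ : ℝ → ℝ := fun t => φ (x + t • d) - t * ⟪G x, d⟫ - K / 2 * ‖d‖ ^ 2 * t ^ 2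
  have hψ : ∀ t ∈ Icc 0 α,
      HasDerivAt ψ (⟪G (x + t • d), d⟫ - ⟪G x, d⟫ - K * t * ‖d‖ ^ 2) t := by
    intro t ht
    have hsq := (hasDerivAt_pow 2 t).const_mul (K / 2 * ‖d‖ ^ 2)
    exact (((hgrad t ht).hasDerivAt_comp_add_smul.fun_sub (hasDerivAt_mul_const _)).fun_sub
      hsq).congr_deriv (by push_cast; ring)
  have hψ_nonpos : ∀ t ∈ Icc 0 α, ⟪G (x + t • d), d⟫ - ⟪G x, d⟫ - K * t * ‖d‖ ^ 2 ≤ 0 := by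
    intro t ht
    rw [sub_nonpos]
    calc ⟪G (x + t • d), d⟫ - ⟪G x, d⟫ = ⟪G (x + t • d) - G x, d⟫ := (inner_sub_left ..).symm
      _ ≤ ‖G (x + t • d) - G x‖ * ‖d‖ := real_inner_le_norm _ _
      _ ≤ K * ‖t • d‖ * ‖d‖ := by gcongr; exact hlip t ht
      _ = K * t * ‖d‖ ^ 2 := by rw [norm_smul, Real.norm_of_nonneg ht.1]; ring
  have hanti : AntitoneOn ψ (Icc 0 α) :=
    antitoneOn_of_hasDerivWithinAt_nonpos (convex_Icc 0 α)
      (HasDerivAt.continuousOn hψ)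
      (fun t ht => (hψ t (interior_subset ht)).hasDerivWithinAt)
      (fun t ht => hψ_nonpos t (interior_subset ht))
  have := hanti (left_mem_Icc.2 hα) (right_mem_Icc.2 hα) hα
  simp only [ψ, zero_smul, add_zero, zero_mul, sub_zero] at this
  linarith

end Descent

namespace EuclideanSpace

variable {ι : Type*} [Fintype ι]

theorem norm_le_mul_norm_of_abs_le {a b : EuclideanSpace ℝ ι} {c : ℝ} (hc : 0 ≤ c)
    (h : ∀ i, |a i| ≤ c * |b i|) : ‖a‖ ≤ c * ‖b‖ := by
  rw [EuclideanSpace.norm_eq, EuclideanSpace.norm_eq, ← Real.sqrt_sq hc,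
    ← Real.sqrt_mul (sq_nonneg c), Finset.mul_sum]
  gcongr with i
  simpa only [Real.norm_eq_abs, mul_pow] using pow_le_pow_left₀ (abs_nonneg _) (h i) 2

noncomputable def reciprocal (y : EuclideanSpace ℝ ι) : EuclideanSpace ℝ ι :=
  WithLp.toLp 2 fun i => (y i)⁻¹

omit [Fintype ι] in
@[simp]
theorem reciprocal_apply (y : EuclideanSpace ℝ ι) (i : ι) : reciprocal y i = (y i)⁻¹ := rfl

theorem hasGradientAt_sum_log {y : EuclideanSpace ℝ ι} (hy : ∀ i, y i ≠ 0) :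
    HasGradientAt (fun z : EuclideanSpace ℝ ι => ∑ i, Real.log (z i)) (reciprocal y) y := by
  have h : HasFDerivAt (fun z : EuclideanSpace ℝ ι => ∑ i, Real.log (z i))
      (∑ i, (y i)⁻¹ • proj (𝕜 := ℝ) i) y :=
    HasFDerivAt.fun_sum fun i _ => by
      exact (Real.hasDerivAt_log (hy i)).comp_hasFDerivAt y (proj (𝕜 := ℝ) (ι := ι) i).hasFDerivAt
  rw [hasGradientAt_iff_hasFDerivAt]
  refine h.congr_fderiv (ContinuousLinearMap.ext fun v => ?_)
  simp [PiLp.inner_apply, mul_comm]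

theorem norm_reciprocal_sub_le {y z : EuclideanSpace ℝ ι} {c : ℝ} (hc : 0 < c)
    (h : ∀ i, c ≤ y i * z i) : ‖reciprocal y - reciprocal z‖ ≤ c⁻¹ * ‖y - z‖ := by
  refine norm_le_mul_norm_of_abs_le (inv_nonneg.2 hc.le) fun i => ?_
  have hyz : 0 < y i * z i := hc.trans_le (h i)
  rw [PiLp.sub_apply, PiLp.sub_apply, reciprocal_apply, reciprocal_apply,
    inv_sub_inv (left_ne_zero_of_mul hyz.ne') (right_ne_zero_of_mul hyz.ne'), abs_div,
    abs_of_pos hyz, abs_sub_comm, div_eq_inv_mul]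
  gcongr
  exact h i

theorem norm_sub_smul_reciprocal_sub_le {a b y z : EuclideanSpace ℝ ι} {L μ c : ℝ}
    (hab : ‖a - b‖ ≤ L * ‖y - z‖) (hμ : 0 ≤ μ) (hc : 0 < c) (h : ∀ i, c ≤ y i * z i) :
    ‖(a - μ • reciprocal y) - (b - μ • reciprocal z)‖ ≤ (L + μ / c) * ‖y - z‖ :=
  calc ‖(a - μ • reciprocal y) - (b - μ • reciprocal z)‖
      = ‖(a - b) - μ • (reciprocal y - reciprocal z)‖ := by rw [smul_sub]; abel_nf
    _ ≤ ‖a - b‖ + μ * ‖reciprocal y - reciprocal z‖ :=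
      (norm_sub_le _ _).trans_eq (by rw [norm_smul, Real.norm_of_nonneg hμ])
    _ ≤ L * ‖y - z‖ + μ * (c⁻¹ * ‖y - z‖) := by
      gcongr
      exact norm_reciprocal_sub_le hc h
    _ = (L + μ / c) * ‖y - z‖ := by ring

theorem hasGradientAt_sub_mul_sum_log {f : EuclideanSpace ℝ ι → ℝ} {y : EuclideanSpace ℝ ι}
    (μ : ℝ) (hf : DifferentiableAt ℝ f y) (hy : ∀ i, y i ≠ 0) :
    HasGradientAt (fun z => f z - μ * ∑ i, Real.log (z i)) (gradient f y - μ • reciprocal y) y := by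
  rw [hasGradientAt_iff_hasFDerivAt, map_sub, map_smul]
  exact hf.hasGradientAt.hasFDerivAt.sub ((hasGradientAt_sum_log hy).hasFDerivAt.const_mul μ)

end EuclideanSpace

theorem sq_mul_iInf_sq_le_mul {ι : Type*} [Finite ι] {x y : ι → ℝ} {s : ℝ} (hs : 0 ≤ s)
    (hs1 : s ≤ 1) (hx : ∀ i, 0 ≤ x i) (hy : ∀ i, s * x i ≤ y i) (i : ι) :
    s ^ 2 * ⨅ j, x j ^ 2 ≤ y i * x i :=
  calc s ^ 2 * ⨅ j, x j ^ 2 ≤ s ^ 2 * x i ^ 2 := by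
        gcongr
        exact ciInf_le (Set.finite_range _).bddBelow i
    _ = (s * x i) * (s * x i) := by ring
    _ ≤ y i * x i :=
        mul_le_mul (hy i) (mul_le_of_le_one_left (hx i) hs1) (mul_nonneg hs (hx i))
          ((mul_nonneg hs (hx i)).trans (hy i))

theorem armijo_of_le_quadratic {a b g D K C α ρ : ℝ} (hα : 0 ≤ α) (hD : 0 ≤ D)
    (hb : b ≤ a + α * g + K / 2 * α ^ 2 * D) (hKC : K / 2 ≤ C) (hC : 0 ≤ C) (hg : g < 0)
    (hρ : ρ < 1) (hαC : α ≤ -(1 - ρ) * g / (C * D)) : a - b ≥ -ρ * α * g := by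
  have hquad : K / 2 * α ^ 2 * D ≤ α * (α * (C * D)) :=
    calc K / 2 * α ^ 2 * D ≤ C * α ^ 2 * D := by gcongr
      _ = α * (α * (C * D)) := by ring
  have hstep : α * (C * D) ≤ -(1 - ρ) * g :=
    mul_le_of_le_div₀ (mul_nonneg_of_nonpos_of_nonpos (by linarith) hg.le) (by positivity) hαC
  linarith [mul_le_mul_of_nonneg_left hstep hα]

theorem barrier_armijo_condition_general
    (n : ℕ) [NeZero n] (Ω : Set (EuclideanSpace ℝ (Fin n)))
    (hΩ : IsOpen Ω)
    (f : EuclideanSpace ℝ (Fin n) → ℝ) (hdiff : DifferentiableOn ℝ f Ω)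
    (L : ℝ) (hL : 0 < L)
    (hLip : ∀ y ∈ Ω, ∀ z ∈ Ω, ‖gradient f y - gradient f z‖ ≤ L * ‖y - z‖)
    (μ : ℝ) (hμ : 0 < μ)
    (φ : EuclideanSpace ℝ (Fin n) → ℝ)
    (hφ : ∀ y : EuclideanSpace ℝ (Fin n), φ y = f y - μ * ∑ i, Real.log (y i))
    (x : EuclideanSpace ℝ (Fin n)) (hx : x ∈ Ω) (hxpos : ∀ i, 0 < x i)
    (d : EuclideanSpace ℝ (Fin n)) (hdesc : ⟪gradient φ x, d⟫ < 0)
    (τ : ℝ) (hτ : τ ∈ Set.Ioo (0 : ℝ) 1)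
    (α' : ℝ)
    (hstep : ∀ α ∈ Set.Icc (0 : ℝ) α',
      x + α • d ∈ Ω ∧ ∀ i, (1 - τ) * x i ≤ (x + α • d) i)
    (C : ℝ) (hC : C = L + μ / (2 * (1 - τ) ^ 2 * ⨅ i, (x i) ^ 2)) :
    ∀ ρ ∈ Set.Ioo (0 : ℝ) 1, ∀ α : ℝ, 0 < α → α ≤ α' →
      α ≤ -(1 - ρ) * ⟪gradient φ x, d⟫ / (C * ‖d‖ ^ 2) →
      φ x - φ (x + α • d) ≥ -ρ * α * ⟪gradient φ x, d⟫ := by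
  intro ρ hρ α hα hαα' hαC
  obtain ⟨hτ0, hτ1⟩ := hτ
  obtain ⟨c, hc_def⟩ : ∃ c, c = (1 - τ) ^ 2 * ⨅ i, x i ^ 2 := ⟨_, rfl⟩
  rw [mul_assoc, ← hc_def] at hC
  have hc : 0 < c := by
    obtain ⟨i₀, hi₀⟩ := exists_eq_ciInf_of_finite (f := fun i => x i ^ 2)
    exact hc_def ▸ mul_pos (pow_pos (sub_pos.2 hτ1) 2) (hi₀ ▸ pow_pos (hxpos i₀) 2)
  have hgrad : ∀ y ∈ Ω, (∀ i, 0 < y i) →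
      HasGradientAt φ (gradient f y - μ • EuclideanSpace.reciprocal y) y := fun y hyΩ hy =>
    funext hφ ▸ EuclideanSpace.hasGradientAt_sub_mul_sum_log μ
      ((hdiff y hyΩ).differentiableAt (hΩ.mem_nhds hyΩ)) fun i => (hy i).ne'
  have hseg : ∀ t ∈ Icc 0 α, x + t • d ∈ Ω ∧ ∀ i, (1 - τ) * x i ≤ (x + t • d) i :=
    fun t ht => hstep t ⟨ht.1, ht.2.trans hαα'⟩
  have hpos : ∀ t ∈ Icc 0 α, ∀ i, 0 < (x + t • d) i := fun t ht i =>
    (mul_pos (sub_pos.2 hτ1) (hxpos i)).trans_le ((hseg t ht).2 i)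
  have hprod : ∀ t ∈ Icc 0 α, ∀ i, c ≤ (x + t • d) i * x i := fun t ht =>
    hc_def ▸ sq_mul_iInf_sq_le_mul (sub_nonneg.2 hτ1.le) (by linarith) (fun i => (hxpos i).le)
      (hseg t ht).2
  have hdescent := le_add_inner_add_of_norm_gradient_sub_le
    (G := fun y => gradient f y - μ • EuclideanSpace.reciprocal y) (K := L + μ / c) hα.le
    (fun t ht => hgrad _ (hseg t ht).1 (hpos t ht)) fun t ht => by
      simpa only [add_sub_cancel_left] using EuclideanSpace.norm_sub_smul_reciprocal_sub_le
        (hLip _ (hseg t ht).1 x hx) hμ.le hc (hprod t ht)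
  have hKC : (L + μ / c) / 2 ≤ C := by
    rw [hC, ← div_div, div_right_comm]
    linarith
  have hC0 : 0 < C := (half_pos (add_pos hL (div_pos hμ hc))).trans_le hKC
  rw [(hgrad x hx hxpos).gradient] at hdesc hαC ⊢
  exact armijo_of_le_quadratic hα.le (sq_nonneg _) hdescent hKC hC0.le hdesc hρ.2 hαC

/-- Armijo condition for the logarithmic barrier function: if `∇f` is `L`-Lipschitz on the
open convex set `Ω`, `φ(y) = f(y) - μ ∑ᵢ ln y⁽ⁱ⁾`, `d` is a descent direction for `φ` at `x`,
the fraction-to-the-boundary rule holds for all step sizes up to `ᾱ`, and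
`C = L + μ/(2(1-τ)² minᵢ (x⁽ⁱ⁾)²)`, then every step size
`α ≤ -(1-ρ)∇φ(x)ᵀd / (C‖d‖²)` satisfies the Armijo condition. -/
theorem barrier_armijo_condition
    (n : ℕ) [NeZero n] (Ω : Set (EuclideanSpace ℝ (Fin n)))
    (hΩ : IsOpen Ω) (hconv : Convex ℝ Ω)
    (f : EuclideanSpace ℝ (Fin n) → ℝ) (hdiff : DifferentiableOn ℝ f Ω)
    (L : ℝ) (hL : 0 < L)
    (hLip : ∀ y ∈ Ω, ∀ z ∈ Ω, ‖gradient f y - gradient f z‖ ≤ L * ‖y - z‖)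
    (μ : ℝ) (hμ : 0 < μ)
    (φ : EuclideanSpace ℝ (Fin n) → ℝ)
    (hφ : ∀ y : EuclideanSpace ℝ (Fin n), φ y = f y - μ * ∑ i, Real.log (y i))
    (x : EuclideanSpace ℝ (Fin n)) (hx : x ∈ Ω) (hxpos : ∀ i, 0 < x i)
    (d : EuclideanSpace ℝ (Fin n)) (hdesc : ⟪gradient φ x, d⟫ < 0)
    (τ : ℝ) (hτ : τ ∈ Set.Ioo (0 : ℝ) 1)
    (α' : ℝ) (hα' : α' ∈ Set.Ioc (0 : ℝ) 1)
    (hstep : ∀ α ∈ Set.Icc (0 : ℝ) α',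
      x + α • d ∈ Ω ∧ ∀ i, (1 - τ) * x i ≤ (x + α • d) i)
    (C : ℝ) (hC : C = L + μ / (2 * (1 - τ) ^ 2 * ⨅ i, (x i) ^ 2)) :
    ∀ ρ ∈ Set.Ioo (0 : ℝ) 1, ∀ α : ℝ, 0 < α → α ≤ α' →
      α ≤ -(1 - ρ) * ⟪gradient φ x, d⟫ / (C * ‖d‖ ^ 2) →
      φ x - φ (x + α • d) ≥ -ρ * α * ⟪gradient φ x, d⟫ :=
  barrier_armijo_condition_general n Ω hΩ f hdiff L hL hLip μ hμ φ hφ x hx hxpos d hdesc τ hτ α'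
    hstep C hC
end

section
/- Let $\Omega \subseteq \mathbb{R}^n$ be open and convex and let $c : \mathbb{R}^n \to \mathbb{R}^m$ be differentiable on $\Omega$ with Jacobian $J(\cdot)$ Lipschitz continuous on $\Omega$ (in operator norm) with constant $L > 0$. Let $x \in \Omega$, let $v, t \in \mathbb{R}^n$ and $d = v + t$, let $h^{\max} > 0$ and $\kappa_1 \in (0,1)$, and assume $\|c(x)\| \le h^{\max}$, $\|c(x) + J(x)v\| < h^{\max}$, and $\|J(x)t\| \le \kappa_1\left(h^{\max} - \|c(x) + J(x)v\|\right)$. Then for every $\alpha \in (0,1]$ with $x + \alpha d \in \Omega$ and $\alpha L\|d\|^2 \le (1-\kappa_1)\left(h^{\max} - \|c(x) + J(x)v\|\right)$, one has $\|c(x + \alpha d)\| \le h^{\max}$. -/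
/-!
Split `c (x + α d)` into its linear model `c x + α J(x) d` and the linearization error. By the
mean value inequality applied to `y ↦ c y - J(x) y`, the Lipschitz Jacobian bounds the error by
`L ‖α d‖² = α (α L ‖d‖²)`. The linear model is the convex combination
`(1 - α) c x + α (c x + J(x) v)` plus `α J(x) t`, so its norm is at most
`(1 - α) hmax + α ‖c x + J(x) v‖ + α κ₁ (hmax - ‖c x + J(x) v‖)`. The step-size condition
makes the error at most `α (1 - κ₁) (hmax - ‖c x + J(x) v‖)`, and the three bounds add up to
exactly `hmax`.
-/

theorem Convex.norm_sub_sub_fderiv_le_of_lipschitz {E F : Type*} [NormedAddCommGroup E]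
    [NormedSpace ℝ E] [NormedAddCommGroup F] [NormedSpace ℝ F] {c : E → F} {s : Set E} (hs : Convex ℝ s)
    (hc : ∀ z ∈ s, DifferentiableAt ℝ c z) {L : ℝ} (hL : 0 ≤ L) {x y : E} (hx : x ∈ s)
    (hy : y ∈ s) (hLip : ∀ z ∈ s, ‖fderiv ℝ c z - fderiv ℝ c x‖ ≤ L * ‖z - x‖) :
    ‖c y - c x - fderiv ℝ c x (y - x)‖ ≤ L * ‖y - x‖ ^ 2 := by
  have hseg : segment ℝ x y ⊆ s := hs.segment_subset hx hy
  have bound : ∀ z ∈ segment ℝ x y, ‖fderiv ℝ c z - fderiv ℝ c x‖ ≤ L * ‖y - x‖ :=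
    fun z hz => (hLip z (hseg hz)).trans <|
      mul_le_mul_of_nonneg_left (norm_sub_le_of_mem_segment hz) hL
  calc ‖c y - c x - fderiv ℝ c x (y - x)‖ ≤ L * ‖y - x‖ * ‖y - x‖ :=
        (convex_segment x y).norm_image_sub_le_of_norm_fderiv_le' (fun z hz => hc z (hseg hz))
          bound (left_mem_segment ℝ x y) (right_mem_segment ℝ x y)
    _ = L * ‖y - x‖ ^ 2 := by ring

theorem norm_add_smul_add_le {F : Type*} [SeminormedAddCommGroup F] [NormedSpace ℝ F]
    (a b e : F) {α : ℝ} (hα0 : 0 ≤ α) (hα1 : α ≤ 1) :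
    ‖a + α • (b + e)‖ ≤ (1 - α) * ‖a‖ + α * ‖a + b‖ + α * ‖e‖ := by
  have hsplit : a + α • (b + e) = (1 - α) • a + α • (a + b) + α • e := by module
  calc ‖a + α • (b + e)‖ ≤ ‖(1 - α) • a‖ + ‖α • (a + b)‖ + ‖α • e‖ :=
        hsplit ▸ norm_add₃_le
    _ = (1 - α) * ‖a‖ + α * ‖a + b‖ + α * ‖e‖ := by
        rw [norm_smul_of_nonneg (by linarith), norm_smul_of_nonneg hα0, norm_smul_of_nonneg hα0]

theorem funnel_bound_preserved_f_iteration_general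
    (n m : ℕ) (Ω : Set (EuclideanSpace ℝ (Fin n))) (hΩ : IsOpen Ω) (hconv : Convex ℝ Ω)
    (c : EuclideanSpace ℝ (Fin n) → EuclideanSpace ℝ (Fin m))
    (hdiff : DifferentiableOn ℝ c Ω) (L : ℝ) (hL : 0 < L)
    (hLip : ∀ y ∈ Ω, ∀ z ∈ Ω, ‖fderiv ℝ c y - fderiv ℝ c z‖ ≤ L * ‖y - z‖)
    (x : EuclideanSpace ℝ (Fin n)) (hx : x ∈ Ω)
    (v t d : EuclideanSpace ℝ (Fin n)) (hd : d = v + t)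
    (hmax κ₁ : ℝ)
    (h1 : ‖c x‖ ≤ hmax)
    (h3 : ‖fderiv ℝ c x t‖ ≤ κ₁ * (hmax - ‖c x + fderiv ℝ c x v‖)) :
    ∀ α : ℝ, 0 < α → α ≤ 1 → x + α • d ∈ Ω →
      α * L * ‖d‖ ^ 2 ≤ (1 - κ₁) * (hmax - ‖c x + fderiv ℝ c x v‖) →
      ‖c (x + α • d)‖ ≤ hmax := by
  intro α hα0 hα1 hxd hstep
  set J := fderiv ℝ c x
  have herr : ‖c (x + α • d) - c x - J (α • d)‖ ≤ L * ‖α • d‖ ^ 2 := by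
    have := hconv.norm_sub_sub_fderiv_le_of_lipschitz
      (fun z hz => hdiff.differentiableAt (hΩ.mem_nhds hz)) hL.le hx hxd
      (fun z hz => hLip z hz x hx)
    rwa [add_sub_cancel_left] at this
  have hmodel := norm_add_smul_add_le (c x) (J v) (J t) hα0.le hα1
  have herr' : L * ‖α • d‖ ^ 2 = α * (α * L * ‖d‖ ^ 2) := by
    rw [norm_smul_of_nonneg hα0.le]; ring
  calc ‖c (x + α • d)‖ = ‖(c (x + α • d) - c x - J (α • d)) + (c x + α • (J v + J t))‖ := by
        rw [hd, map_smul, map_add, sub_sub, sub_add_cancel]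
    _ ≤ ‖c (x + α • d) - c x - J (α • d)‖ + ‖c x + α • (J v + J t)‖ := norm_add_le _ _
    _ ≤ hmax := by
        linarith [mul_le_mul_of_nonneg_left hstep hα0.le, mul_le_mul_of_nonneg_left h1
          (sub_nonneg.2 hα1), mul_le_mul_of_nonneg_left h3 hα0.le]

/-- Funnel-bound preservation for `f`-iterations: under the Lipschitz-Jacobian assumption,
if `‖c(x)‖ ≤ hmax`, `‖c(x) + J(x)v‖ < hmax` and the quasi-tangential step satisfies
`‖J(x)t‖ ≤ κ₁(hmax - ‖c(x) + J(x)v‖)`, then any step size `α ∈ (0,1]` with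
`α L ‖d‖² ≤ (1-κ₁)(hmax - ‖c(x) + J(x)v‖)` keeps the new infeasibility within the funnel:
`‖c(x + αd)‖ ≤ hmax`. -/
theorem funnel_bound_preserved_f_iteration
    (n m : ℕ) (Ω : Set (EuclideanSpace ℝ (Fin n))) (hΩ : IsOpen Ω) (hconv : Convex ℝ Ω)
    (c : EuclideanSpace ℝ (Fin n) → EuclideanSpace ℝ (Fin m))
    (hdiff : DifferentiableOn ℝ c Ω) (L : ℝ) (hL : 0 < L)
    (hLip : ∀ y ∈ Ω, ∀ z ∈ Ω, ‖fderiv ℝ c y - fderiv ℝ c z‖ ≤ L * ‖y - z‖)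
    (x : EuclideanSpace ℝ (Fin n)) (hx : x ∈ Ω)
    (v t d : EuclideanSpace ℝ (Fin n)) (hd : d = v + t)
    (hmax κ₁ : ℝ) (hhmax : 0 < hmax) (hκ₁ : κ₁ ∈ Set.Ioo (0 : ℝ) 1)
    (h1 : ‖c x‖ ≤ hmax)
    (h2 : ‖c x + fderiv ℝ c x v‖ < hmax)
    (h3 : ‖fderiv ℝ c x t‖ ≤ κ₁ * (hmax - ‖c x + fderiv ℝ c x v‖)) :
    ∀ α : ℝ, 0 < α → α ≤ 1 → x + α • d ∈ Ω →
      α * L * ‖d‖ ^ 2 ≤ (1 - κ₁) * (hmax - ‖c x + fderiv ℝ c x v‖) →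
      ‖c (x + α • d)‖ ≤ hmax :=
  funnel_bound_preserved_f_iteration_general n m Ω hΩ hconv c hdiff L hL hLip x hx v t d hd hmax κ₁
    h1 h3
end

section
/- Let $J \in \mathbb{R}^{m\times n}$, let $c \in \mathbb{R}^m$ with $c \neq 0$, and let $\eta > 0$. If $v \in \mathbb{R}^n$ is a global minimizer of $v \mapsto \|c + Jv\|^2 + \eta\|v\|^2$ over $\mathbb{R}^n$, then $\|c\| - \|c + Jv\| \ge \frac{\eta\|v\|^2}{2\|c\|}$. -/
open Matrix

/-- Cauchy-type decrease for the regularized (Levenberg–Marquardt) normal subproblem: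
a global minimizer `v` of `‖c + Jv‖² + η‖v‖²` with `c ≠ 0` and `η > 0` satisfies
`‖c‖ - ‖c + Jv‖ ≥ η‖v‖²/(2‖c‖)`. -/
theorem regularized_normal_subproblem_decrease
    (n m : ℕ) (J : Matrix (Fin m) (Fin n) ℝ) (c : EuclideanSpace ℝ (Fin m)) (hc : c ≠ 0)
    (η : ℝ) (hη : 0 < η) (v : EuclideanSpace ℝ (Fin n))
    (hmin : ∀ w : EuclideanSpace ℝ (Fin n),
      ‖c + toEuclideanLin J v‖ ^ 2 + η * ‖v‖ ^ 2 ≤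
        ‖c + toEuclideanLin J w‖ ^ 2 + η * ‖w‖ ^ 2) :
    η * ‖v‖ ^ 2 / (2 * ‖c‖) ≤ ‖c‖ - ‖c + toEuclideanLin J v‖ := by
  have h0 := hmin 0
  simp only [map_zero, add_zero, norm_zero, ne_eq, OfNat.ofNat_ne_zero,
    not_false_eq_true, zero_pow, mul_zero] at h0
  have hcpos : 0 < ‖c‖ := norm_pos_iff.mpr hc
  rw [div_le_iff₀ (by positivity)]
  nlinarith [norm_nonneg (c + toEuclideanLin J v), sq_nonneg (‖c‖ - ‖c + toEuclideanLin J v‖),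
    sq_nonneg ‖v‖]
end

section
/- Let $\Omega \subseteq \mathbb{R}^n$ be open and convex and let $c : \mathbb{R}^n \to \mathbb{R}^m$ be differentiable on $\Omega$ with Jacobian $J(\cdot)$ Lipschitz continuous on $\Omega$ (in operator norm) with constant $L > 0$. Let $x \in \Omega$, let $v, t \in \mathbb{R}^n$ and $d = v + t$, let $\rho, \kappa_2 \in (0,1)$ and $\theta > 0$, and assume $\|c(x)\| - \|c(x) + J(x)v\| \ge \theta$ and $\|J(x)t\| \le \kappa_2\left(\|c(x)\| - \|c(x) + J(x)v\|\right)$. Then for every $\alpha \in (0,1]$ with $x + \alpha d \in \Omega$ and $\alpha L\|d\|^2 \le (1-\rho)(1-\kappa_2)\theta$, one has $\|c(x + \alpha d)\| \le (1-\rho)\|c(x)\| + \rho\|c(x) + \alpha J(x) d\|$. -/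
set_option maxHeartbeats 1000000


/-- Acceptance condition for `h`-iterations in the trust-funnel line search: under the
Lipschitz-Jacobian assumption, if the normal step gives a linearized decrease of at least
`θ > 0` and the quasi-tangential step satisfies
`‖J(x)t‖ ≤ κ₂(‖c(x)‖ - ‖c(x) + J(x)v‖)`, then any step size `α ∈ (0,1]` with
`α L ‖d‖² ≤ (1-ρ)(1-κ₂)θ` satisfies
`‖c(x + αd)‖ ≤ (1-ρ)‖c(x)‖ + ρ‖c(x) + α J(x)d‖`. -/
theorem h_iteration_acceptance_condition
    (n m : ℕ) (Ω : Set (EuclideanSpace ℝ (Fin n))) (hΩ : IsOpen Ω) (hconv : Convex ℝ Ω)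
    (c : EuclideanSpace ℝ (Fin n) → EuclideanSpace ℝ (Fin m))
    (hdiff : DifferentiableOn ℝ c Ω) (L : ℝ) (hL : 0 < L)
    (hLip : ∀ y ∈ Ω, ∀ z ∈ Ω, ‖fderiv ℝ c y - fderiv ℝ c z‖ ≤ L * ‖y - z‖)
    (x : EuclideanSpace ℝ (Fin n)) (hx : x ∈ Ω)
    (v t d : EuclideanSpace ℝ (Fin n)) (hd : d = v + t)
    (ρ κ₂ θ : ℝ) (hρ : ρ ∈ Set.Ioo (0 : ℝ) 1) (hκ₂ : κ₂ ∈ Set.Ioo (0 : ℝ) 1) (hθ : 0 < θ)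
    (h1 : θ ≤ ‖c x‖ - ‖c x + fderiv ℝ c x v‖)
    (h2 : ‖fderiv ℝ c x t‖ ≤ κ₂ * (‖c x‖ - ‖c x + fderiv ℝ c x v‖)) :
    ∀ α : ℝ, 0 < α → α ≤ 1 → x + α • d ∈ Ω →
      α * L * ‖d‖ ^ 2 ≤ (1 - ρ) * (1 - κ₂) * θ →
      ‖c (x + α • d)‖ ≤ (1 - ρ) * ‖c x‖ + ρ * ‖c x + α • fderiv ℝ c x d‖ := by
  intro α hα0 hα1 hxΩ hstep
  set J := fderiv ℝ c x with hJ
  set y := x + α • d with hy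
  set s : Set (EuclideanSpace ℝ (Fin n)) := segment ℝ x y with hs
  have hsΩ : s ⊆ Ω := hconv.segment_subset hx hxΩ
  -- distance bound on the segment
  have hdist : ∀ z ∈ s, ‖z - x‖ ≤ α * ‖d‖ := by
    intro z hz
    obtain ⟨a, b, ha, hb, hab, rfl⟩ := hz
    have : a • x + b • y - x = b • (α • d) := by
      rw [hy]
      have hax : a • x = (1 - b) • x := by rw [← hab]; ring_nf
      rw [hax]
      module
    rw [this, norm_smul, norm_smul, Real.norm_eq_abs, Real.norm_eq_abs,
      abs_of_nonneg hb, abs_of_pos hα0]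
    have hb1 : b ≤ 1 := by linarith
    nlinarith [mul_nonneg hα0.le (norm_nonneg d)]
  -- Taylor bound via MVT applied to g z = c z - J z
  have htaylor : ‖c y - c x - α • J d‖ ≤ L * α ^ 2 * ‖d‖ ^ 2 := by
    have hfd : ∀ z ∈ s, HasFDerivWithinAt (fun w => c w - J w)
        (fderiv ℝ c z - J) s z := by
      intro z hz
      have hdz : DifferentiableAt ℝ c z :=
        (hdiff z (hsΩ hz)).differentiableAt (hΩ.mem_nhds (hsΩ hz))
      exact ((hdz.hasFDerivAt.sub (J.hasFDerivAt)).hasFDerivWithinAt)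
    have hbound : ∀ z ∈ s, ‖fderiv ℝ c z - J‖ ≤ L * (α * ‖d‖) := by
      intro z hz
      calc ‖fderiv ℝ c z - J‖ ≤ L * ‖z - x‖ := hLip z (hsΩ hz) x hx
        _ ≤ L * (α * ‖d‖) := by
            have := hdist z hz
            nlinarith
    have key : ‖(c y - J y) - (c x - J x)‖ ≤ (L * (α * ‖d‖)) * ‖y - x‖ :=
      Convex.norm_image_sub_le_of_norm_hasFDerivWithin_le hfd hbound
        (convex_segment _ _) (left_mem_segment ℝ x y) (right_mem_segment ℝ x y)
    have hyx : y - x = α • d := by rw [hy]; abel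
    have hJy : J y - J x = α • J d := by
      rw [hy]; simp [map_add, map_smul]
    have heq : (c y - J y) - (c x - J x) = c y - c x - α • J d := by
      rw [← hJy]; abel
    rw [heq, hyx, norm_smul, Real.norm_eq_abs, abs_of_pos hα0] at key
    calc ‖c y - c x - α • J d‖ ≤ (L * (α * ‖d‖)) * (α * ‖d‖) := key
      _ = L * α ^ 2 * ‖d‖ ^ 2 := by ring
  -- bound on the linearized model
  have hJd : J d = J v + J t := by rw [hd]; exact map_add J v t
  have hlin : ‖c x + α • J d‖ ≤ ‖c x‖ - α * (1 - κ₂) * (‖c x‖ - ‖c x + J v‖) := by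
    have hdecomp : c x + α • J d = (1 - α) • c x + α • (c x + J v) + α • J t := by
      rw [hJd]; module
    calc ‖c x + α • J d‖ = ‖(1 - α) • c x + α • (c x + J v) + α • J t‖ := by rw [hdecomp]
      _ ≤ ‖(1 - α) • c x + α • (c x + J v)‖ + ‖α • J t‖ := norm_add_le _ _
      _ ≤ ‖(1 - α) • c x‖ + ‖α • (c x + J v)‖ + ‖α • J t‖ := by
          gcongr; exact norm_add_le _ _
      _ = (1 - α) * ‖c x‖ + α * ‖c x + J v‖ + α * ‖J t‖ := by
          simp only [norm_smul, Real.norm_eq_abs]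
          rw [abs_of_nonneg (by linarith : (0:ℝ) ≤ 1 - α), abs_of_pos hα0]
      _ ≤ ‖c x‖ - α * (1 - κ₂) * (‖c x‖ - ‖c x + J v‖) := by nlinarith
  -- combine
  have hfin : ‖c (x + α • d)‖ ≤ ‖c x + α • J d‖ + L * α ^ 2 * ‖d‖ ^ 2 := by
    have : ‖c y‖ ≤ ‖c x + α • J d‖ + ‖c y - c x - α • J d‖ := by
      have : c y = (c x + α • J d) + (c y - c x - α • J d) := by abel
      calc ‖c y‖ = ‖(c x + α • J d) + (c y - c x - α • J d)‖ := by rw [← this]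
        _ ≤ _ := norm_add_le _ _
    linarith [htaylor]
  have hΔ : α * (1 - κ₂) * θ ≤ ‖c x‖ - ‖c x + α • J d‖ := by
    have h0 : 0 < 1 - κ₂ := by linarith [hκ₂.2]
    have hc := mul_le_mul_of_nonneg_left h1 (mul_pos hα0 h0).le
    nlinarith [hlin, hc]
  have hρ1 : 0 < 1 - ρ := by linarith [hρ.2]
  have hsq : L * α ^ 2 * ‖d‖ ^ 2 ≤ α * ((1 - ρ) * (1 - κ₂) * θ) := by
    nlinarith
  nlinarith [hρ.1, hΔ, hfin, hsq, norm_nonneg (c x + α • J d)]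
end
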